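/- Let μ > 0 and γ > 0. Define h(z) = e^{−z} z^z / z! for z ∈ ℕ (with h(0) = 1), r(μ, γ, z) = γ(z − μ + z·log μ − z·log z) (with z·log z = 0 when z = 0), s(μ, γ, z) = h(z)·exp(r(μ, γ, z)), and d(μ, γ) = γ^{−1/2}[∑_{y=0}^∞ s(μ, γ, y)(γ(y − μ)² − y) + ∑_{y=0}^∞ s(μ, γ, y)(y − μ)]. Assume S = ∑_{y=0}^∞ s(μ, γ, y), ∑_{y=0}^∞ y·s(μ, γ, y), and ∑_{y=0}^∞ y²·s(μ, γ, y) are all finite with S > 0, and let p(y) = s(μ, γ, y)/S. Then the variance satisfies ∑_{y=0}^∞ y²·p(y) − (∑_{y=0}^∞ y·p(y))² = μ/γ + [d(μ, γ)·γ^{1/2}·S − γ·(∑_{y=0}^∞ s(μ, γ, y)(y − μ))²] / (γ·S²). -/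
import Mathlib


/-- The variance of the normalized Double Poisson distribution equals
`μ/γ + (d γ^{1/2} S - γ (∑ s(y-μ))²) / (γ S²)`, where `S = ∑ s(μ,γ,y)` and
`d(μ,γ) = γ^{-1/2} [∑ s(μ,γ,y)(γ(y-μ)² - y) + ∑ s(μ,γ,y)(y-μ)]`. -/
theorem double_poisson_variance_deviation (μ γ : ℝ) (hμ : 0 < μ) (hγ : 0 < γ)
    (s : ℕ → ℝ)
    (hs : ∀ z : ℕ, s z =
      (Real.exp (-(z : ℝ)) * (z : ℝ) ^ (z : ℕ) / (Nat.factorial z)) *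
        Real.exp (γ * ((z : ℝ) - μ + (z : ℝ) * Real.log μ - (z : ℝ) * Real.log z)))
    (d : ℝ)
    (hd : d = γ ^ (-(1 : ℝ) / 2) *
      ((∑' y : ℕ, s y * (γ * ((y : ℝ) - μ) ^ 2 - (y : ℝ))) +
        ∑' y : ℕ, s y * ((y : ℝ) - μ)))
    (hS : Summable s) (hS1 : Summable (fun y : ℕ => (y : ℝ) * s y))
    (hS2 : Summable (fun y : ℕ => (y : ℝ) ^ 2 * s y))
    (hSpos : 0 < ∑' y : ℕ, s y) :
    (∑' y : ℕ, (y : ℝ) ^ 2 * (s y / ∑' z : ℕ, s z)) -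
        (∑' y : ℕ, (y : ℝ) * (s y / ∑' z : ℕ, s z)) ^ 2
      = μ / γ +
        (d * γ ^ ((1 : ℝ) / 2) * (∑' y : ℕ, s y) -
            γ * (∑' y : ℕ, s y * ((y : ℝ) - μ)) ^ 2) /
          (γ * (∑' y : ℕ, s y) ^ 2) := by
  set S := ∑' y : ℕ, s y with hSdef
  set M1 := ∑' y : ℕ, (y : ℝ) * s y with hM1def
  set M2 := ∑' y : ℕ, (y : ℝ) ^ 2 * s y with hM2def
  have hSne : S ≠ 0 := ne_of_gt hSpos
  have hγne : γ ≠ 0 := ne_of_gt hγ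
  -- rpow cancellation
  have hrpow : γ ^ (-(1 : ℝ) / 2) * γ ^ ((1 : ℝ) / 2) = 1 := by
    rw [← Real.rpow_add hγ]
    norm_num
  -- normalized moments
  have h1 : (∑' y : ℕ, (y : ℝ) ^ 2 * (s y / S)) = M2 / S := by
    rw [← tsum_div_const]
    exact tsum_congr fun y => by ring
  have h2 : (∑' y : ℕ, (y : ℝ) * (s y / S)) = M1 / S := by
    rw [← tsum_div_const]
    exact tsum_congr fun y => by ring
  -- first centered sum
  have hB : (∑' y : ℕ, s y * ((y : ℝ) - μ)) = M1 - μ * S := by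
    have : (fun y : ℕ => s y * ((y : ℝ) - μ))
        = fun y : ℕ => (y : ℝ) * s y - μ * s y := by
      funext y; ring
    rw [this, Summable.tsum_sub hS1 (hS.mul_left μ), hM1def, hSdef, tsum_mul_left]
  -- quadratic sum
  have hA : (∑' y : ℕ, s y * (γ * ((y : ℝ) - μ) ^ 2 - (y : ℝ)))
      = γ * M2 - (2 * γ * μ + 1) * M1 + γ * μ ^ 2 * S := by
    have : (fun y : ℕ => s y * (γ * ((y : ℝ) - μ) ^ 2 - (y : ℝ)))
        = fun y : ℕ => γ * ((y : ℝ) ^ 2 * s y)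
            - (2 * γ * μ + 1) * ((y : ℝ) * s y) + γ * μ ^ 2 * s y := by
      funext y; ring
    rw [this, Summable.tsum_add (Summable.sub (hS2.mul_left _) (hS1.mul_left _)) (hS.mul_left _),
      Summable.tsum_sub (hS2.mul_left _) (hS1.mul_left _), tsum_mul_left, tsum_mul_left,
      tsum_mul_left, hM1def, hM2def, hSdef]
  rw [h1, h2, hB, hd, hA, hB]
  have hexp : γ ^ (-(1 : ℝ) / 2) *
      (γ * M2 - (2 * γ * μ + 1) * M1 + γ * μ ^ 2 * S + (M1 - μ * S)) * γ ^ ((1 : ℝ) / 2)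
      = γ * M2 - (2 * γ * μ + 1) * M1 + γ * μ ^ 2 * S + (M1 - μ * S) := by
    calc γ ^ (-(1 : ℝ) / 2) *
        (γ * M2 - (2 * γ * μ + 1) * M1 + γ * μ ^ 2 * S + (M1 - μ * S)) * γ ^ ((1 : ℝ) / 2)
        = (γ ^ (-(1 : ℝ) / 2) * γ ^ ((1 : ℝ) / 2)) *
          (γ * M2 - (2 * γ * μ + 1) * M1 + γ * μ ^ 2 * S + (M1 - μ * S)) := by ring
      _ = _ := by rw [hrpow]; ring
  rw [hexp]
  field_simp
  ring
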